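/- Let F be a field of characteristic p > 0 and n ≥ 1. Then the 2n central elements x_1^p,…,x_n^p, y_1^p,…,y_n^p of the Weyl algebra A_n(F) are algebraically independent over F; consequently the center Z(A_n(F)) is isomorphic as an F-algebra to the polynomial ring in 2n variables F[z_1,…,z_{2n}] (MvPolynomial (Fin (2n)) F). -/

import Mathlib

set_option synthInstance.maxHeartbeats 1000000
set_option maxHeartbeats 4000000

open scoped nonZeroDivisors
open Matrix

/-- The defining relations of the `n`-th Weyl algebra, on generators indexed by
`Fin n ⊕ Fin n` (`Sum.inl i ↦ xᵢ`, `Sum.inr i ↦ yᵢ`):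
`xᵢxⱼ = xⱼxᵢ`, `yᵢyⱼ = yⱼyᵢ`, `yᵢxⱼ = xⱼyᵢ + δᵢⱼ`. -/
inductive WeylRel (R : Type*) [CommRing R] (n : ℕ) :
    FreeAlgebra R (Fin n ⊕ Fin n) → FreeAlgebra R (Fin n ⊕ Fin n) → Prop
  | xx (i j : Fin n) : WeylRel R n
      (FreeAlgebra.ι R (Sum.inl i) * FreeAlgebra.ι R (Sum.inl j))
      (FreeAlgebra.ι R (Sum.inl j) * FreeAlgebra.ι R (Sum.inl i))
  | yy (i j : Fin n) : WeylRel R n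
      (FreeAlgebra.ι R (Sum.inr i) * FreeAlgebra.ι R (Sum.inr j))
      (FreeAlgebra.ι R (Sum.inr j) * FreeAlgebra.ι R (Sum.inr i))
  | yx (i j : Fin n) : WeylRel R n
      (FreeAlgebra.ι R (Sum.inr i) * FreeAlgebra.ι R (Sum.inl j))
      (FreeAlgebra.ι R (Sum.inl j) * FreeAlgebra.ι R (Sum.inr i)
        + if i = j then 1 else 0)

/-- The `n`-th Weyl algebra `A_n(R)`. -/
abbrev WeylAlgebra (R : Type*) [CommRing R] (n : ℕ) : Type _ := RingQuot (WeylRel R n)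

/-- The generator `xᵢ` of the Weyl algebra. -/
noncomputable def wX (R : Type*) [CommRing R] (n : ℕ) (i : Fin n) : WeylAlgebra R n :=
  RingQuot.mkAlgHom R (WeylRel R n) (FreeAlgebra.ι R (Sum.inl i))

/-- The generator `yᵢ` of the Weyl algebra. -/
noncomputable def wY (R : Type*) [CommRing R] (n : ℕ) (i : Fin n) : WeylAlgebra R n :=
  RingQuot.mkAlgHom R (WeylRel R n) (FreeAlgebra.ι R (Sum.inr i))

/-- The skew field of fractions `Frac(A_n(F))` of the Weyl algebra, realized as the Ore
localization of `A_n(F)` at the Ore set of its nonzero elements (it is a division ring,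
given that `A_n(F)` is a noetherian domain). -/
abbrev WeylFrac (F : Type*) [Field F] (n : ℕ)
    [OreLocalization.OreSet (WeylAlgebra F n)⁰] : Type _ :=
  OreLocalization (WeylAlgebra F n)⁰ (WeylAlgebra F n)

/-- The canonical inclusion of the Weyl algebra into its skew field of fractions. -/
noncomputable def weylToFrac (F : Type*) [Field F] (n : ℕ)
    [OreLocalization.OreSet (WeylAlgebra F n)⁰] :
    WeylAlgebra F n →+* WeylFrac F n :=
  OreLocalization.numeratorRingHom

section Fixed
variable {G : Type*} [Group G]

/-- The fixed subalgebra (`Q^G`) of an action of `G` by `F`-algebra automorphisms. -/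
def fixedSubalgebra (F : Type*) {Q : Type*} [CommSemiring F] [Semiring Q] [Algebra F Q]
    (ρ : G →* (Q ≃ₐ[F] Q)) : Subalgebra F Q where
  carrier := {a | ∀ g, ρ g a = a}
  algebraMap_mem' := fun r g => (ρ g).commutes r
  add_mem' := fun ha hb g => by rw [_root_.map_add, ha g, hb g]
  mul_mem' := fun ha hb g => by rw [_root_.map_mul, ha g, hb g]

/-- The fixed sub-division-ring (`Q^G`) of an action of `G` by `F`-algebra automorphisms
of a division ring, as a `Subfield` in Mathlib's sense (a sub-division-ring). -/
def fixedSubfield (F : Type*) {Q : Type*} [CommSemiring F] [DivisionRing Q] [Algebra F Q]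
    (ρ : G →* (Q ≃ₐ[F] Q)) : Subfield Q where
  carrier := {a | ∀ g, ρ g a = a}
  one_mem' := fun g => map_one _
  zero_mem' := fun g => map_zero _
  add_mem' := fun ha hb g => by rw [_root_.map_add, ha g, hb g]
  mul_mem' := fun ha hb g => by rw [_root_.map_mul, ha g, hb g]
  neg_mem' := fun ha g => by rw [map_neg, ha g]
  inv_mem' := fun a ha g => by rw [map_inv₀, ha g]

end Fixed

/-- A field extension `K/F` is *stably rational over `F`* if some rational function field
`K(t₁,…,t_m)` over `K` is isomorphic, as an `F`-algebra, to a rational function field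
`F(z₁,…,z_N)` over `F` in finitely many variables. -/
def IsStablyRational (F K : Type*) [Field F] [Field K] [Algebra F K] : Prop :=
  ∃ m N : ℕ, Nonempty
    (FractionRing (MvPolynomial (Fin m) K) ≃ₐ[F] FractionRing (MvPolynomial (Fin N) F))

section Actions

variable {F : Type*} [Field F] {n : ℕ}

/-- `ρ` is the symplectic action of the subgroup `G ≤ GLₙ(F)` on `Frac(A_n(F))`:
`g` maps `xⱼ` to `∑ᵢ gᵢⱼ xᵢ` and `yⱼ` to `∑ᵢ ((gᵀ)⁻¹)ᵢⱼ yᵢ = ∑ᵢ (g⁻¹)ⱼᵢ yᵢ`.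
(Such an action exists and is unique, since the extension of the linear action from
`A_n(F)` to its skew field of fractions is unique.) -/
def IsWeylFracAction [OreLocalization.OreSet (WeylAlgebra F n)⁰]
    (G : Subgroup (GL (Fin n) F)) (ρ : G →* (WeylFrac F n ≃ₐ[F] WeylFrac F n)) : Prop :=
  ∀ g : G,
    (∀ j, ρ g (weylToFrac F n (wX F n j)) =
      ∑ i, ((g : GL (Fin n) F) : Matrix (Fin n) (Fin n) F) i j • weylToFrac F n (wX F n i)) ∧
    (∀ j, ρ g (weylToFrac F n (wY F n j)) =
      ∑ i, (((g : GL (Fin n) F)⁻¹ : GL (Fin n) F) : Matrix (Fin n) (Fin n) F) j i •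
        weylToFrac F n (wY F n i))

/-- `ρ` is the symplectic action of a subgroup `G ≤ GLₙ(ℤ)` on `Frac(A_n(F))`, acting
through the (entrywise) reduction map `GLₙ(ℤ) → GLₙ(F)`. -/
def IsWeylFracActionInt [OreLocalization.OreSet (WeylAlgebra F n)⁰]
    (G : Subgroup (GL (Fin n) ℤ)) (ρ : G →* (WeylFrac F n ≃ₐ[F] WeylFrac F n)) : Prop :=
  ∀ g : G,
    (∀ j, ρ g (weylToFrac F n (wX F n j)) =
      ∑ i, (((g : GL (Fin n) ℤ) : Matrix (Fin n) (Fin n) ℤ) i j : F) •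
        weylToFrac F n (wX F n i)) ∧
    (∀ j, ρ g (weylToFrac F n (wY F n j)) =
      ∑ i, ((((g : GL (Fin n) ℤ)⁻¹ : GL (Fin n) ℤ) : Matrix (Fin n) (Fin n) ℤ) j i : F) •
        weylToFrac F n (wY F n i))

/-- `ρ` is the linear action of the subgroup `G ≤ GLₙ(F)` on the rational function field
`F(x₁,…,xₙ)`: `g` maps `xⱼ` to `∑ᵢ gᵢⱼ xᵢ`. -/
def IsMvRatAction (G : Subgroup (GL (Fin n) F))
    (ρ : G →* (FractionRing (MvPolynomial (Fin n) F) ≃ₐ[F]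
      FractionRing (MvPolynomial (Fin n) F))) : Prop :=
  ∀ g : G, ∀ j,
    ρ g (algebraMap (MvPolynomial (Fin n) F) (FractionRing (MvPolynomial (Fin n) F))
        (MvPolynomial.X j)) =
      ∑ i, ((g : GL (Fin n) F) : Matrix (Fin n) (Fin n) F) i j •
        algebraMap (MvPolynomial (Fin n) F) (FractionRing (MvPolynomial (Fin n) F))
          (MvPolynomial.X i)

/-- `ρ` is the linear action of a subgroup `G ≤ GLₙ(ℤ)` on the rational function field
`F(x₁,…,xₙ)`, acting through the (entrywise) reduction map `GLₙ(ℤ) → GLₙ(F)`. -/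
def IsMvRatActionInt (G : Subgroup (GL (Fin n) ℤ))
    (ρ : G →* (FractionRing (MvPolynomial (Fin n) F) ≃ₐ[F]
      FractionRing (MvPolynomial (Fin n) F))) : Prop :=
  ∀ g : G, ∀ j,
    ρ g (algebraMap (MvPolynomial (Fin n) F) (FractionRing (MvPolynomial (Fin n) F))
        (MvPolynomial.X j)) =
      ∑ i, (((g : GL (Fin n) ℤ) : Matrix (Fin n) (Fin n) ℤ) i j : F) •
        algebraMap (MvPolynomial (Fin n) F) (FractionRing (MvPolynomial (Fin n) F))
          (MvPolynomial.X i)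

end Actions

/-- The family `x₁ᵖ,…,xₙᵖ, y₁ᵖ,…,yₙᵖ` of elements of the Weyl algebra `A_n(F)`,
indexed by `Fin n ⊕ Fin n`. -/
noncomputable def weylPthPowers (F : Type*) [Field F] (n p : ℕ) :
    Fin n ⊕ Fin n → WeylAlgebra F n
  | Sum.inl i => wX F n i ^ p
  | Sum.inr i => wY F n i ^ p

/-!
Write `ξᵢ = X (inl i)` and `ηᵢ = X (inr i)`. The normal-ordering map `Ψ : R[ξ, η] → A_n(R)`,
`ξ^a η^b ↦ x^a y^b`, is a linear bijection: its image is stable under left multiplication by the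
generators, and applying `Ψ q` to `1` in the representation `xᵢ ↦ ξᵢ`, `yᵢ ↦ ∂/∂ξᵢ + ηᵢ`
recovers `q`. Through `Ψ`, the commutators with `yⱼ` and `xⱼ` become `∂/∂ξⱼ` and `∂/∂ηⱼ`, so
`Ψ q` is central exactly when every partial derivative of `q` vanishes. In characteristic `p`
this means that `q` is a polynomial in the `p`-th powers of the variables, and then `Ψ q` is the
same polynomial evaluated at the `xᵢᵖ, yᵢᵖ`.
-/

open scoped TensorProduct

namespace MvPolynomial

variable {R σ ι : Type*}

section CommSemiring

variable [CommSemiring R]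

open scoped IsMulCommutative in
noncomputable def aevalOfCommute {A : Type*} [Semiring A] [Algebra R A] (f : σ → A)
    (hf : ∀ i j, Commute (f i) (f j)) : MvPolynomial σ R →ₐ[R] A :=
  haveI := Algebra.isMulCommutative_adjoin R (s := Set.range f)
    (by rintro _ ⟨i, rfl⟩ _ ⟨j, rfl⟩; exact hf i j)
  (Algebra.adjoin R (Set.range f)).val.comp
    (aeval fun i => ⟨f i, Algebra.subset_adjoin ⟨i, rfl⟩⟩)

@[simp]
theorem aevalOfCommute_X {A : Type*} [Semiring A] [Algebra R A] (f : σ → A)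
    (hf : ∀ i j, Commute (f i) (f j)) (i : σ) :
    aevalOfCommute f hf (X i : MvPolynomial σ R) = f i := by
  simp [aevalOfCommute]

theorem pderiv_rename_of_notMem_range {f : σ → ι} {i : ι} (hi : i ∉ Set.range f)
    (q : MvPolynomial σ R) : pderiv i (rename f q) = 0 := by
  induction q using MvPolynomial.induction_on with
  | C a => simp
  | add f g hf hg => simp [hf, hg]
  | mul_X q j hq =>
    rw [map_mul, pderiv_mul, hq, rename_X, pderiv_X_of_ne fun h => hi ⟨j, h⟩]
    simp

theorem pderiv_comm (i j : σ) (q : MvPolynomial σ R) :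
    pderiv i (pderiv j q) = pderiv j (pderiv i q) := by
  classical
  induction q using MvPolynomial.induction_on with
  | C a => simp
  | add f g hf hg => simp [hf, hg]
  | mul_X q k hq =>
    simp only [pderiv_mul, map_add, pderiv_X, hq, Pi.single_apply]
    split_ifs <;> simp [add_comm, add_left_comm]

theorem tensorEquivSum_tmul (f : MvPolynomial σ R) (g : MvPolynomial ι R) :
    tensorEquivSum R σ ι R (f ⊗ₜ g) = rename Sum.inl f * rename Sum.inr g := by
  have hl : ((tensorEquivSum R σ ι R).toAlgHom.comp Algebra.TensorProduct.includeLeft) =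
      rename Sum.inl := by
    ext i; simp
  have hr : ((tensorEquivSum R σ ι R).toAlgHom.comp Algebra.TensorProduct.includeRight) =
      rename Sum.inr := by
    ext i; simp
  rw [← mul_one f, ← one_mul g, ← Algebra.TensorProduct.tmul_mul_tmul, map_mul, ← hl, ← hr]
  simp

theorem pderiv_inl_rename_mul_rename (j : σ) (f : MvPolynomial σ R) (g : MvPolynomial ι R) :
    pderiv (Sum.inl j) (rename Sum.inl f * rename Sum.inr g) =
      rename Sum.inl (pderiv j f) * rename Sum.inr g := by
  rw [pderiv_mul, pderiv_rename Sum.inl_injective,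
    pderiv_rename_of_notMem_range (by simp), mul_zero, add_zero]

theorem pderiv_inr_rename_mul_rename (j : ι) (f : MvPolynomial σ R) (g : MvPolynomial ι R) :
    pderiv (Sum.inr j) (rename Sum.inl f * rename Sum.inr g) =
      rename Sum.inl f * rename Sum.inr (pderiv j g) := by
  rw [pderiv_mul, pderiv_rename Sum.inr_injective,
    pderiv_rename_of_notMem_range (by simp), zero_mul, zero_add]

@[elab_as_elim]
theorem induction_on_rename_mul_rename {P : MvPolynomial (σ ⊕ ι) R → Prop}
    (q : MvPolynomial (σ ⊕ ι) R) (add : ∀ a b, P a → P b → P (a + b))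
    (rename_mul : ∀ f g, P (rename Sum.inl f * rename Sum.inr g)) : P q := by
  obtain ⟨t, rfl⟩ := (tensorEquivSum R σ ι R).surjective q
  induction t using TensorProduct.induction_on with
  | zero => simpa using rename_mul 0 0
  | tmul f g => rw [tensorEquivSum_tmul]; exact rename_mul f g
  | add a b ha hb => rw [map_add]; exact add _ _ ha hb

end CommSemiring

theorem pderiv_pow_char [CommSemiring R] (p : ℕ) [CharP R p] (i : σ) (f : MvPolynomial σ R) :
    pderiv i (f ^ p) = 0 := by
  rw [pderiv_pow, CharP.cast_eq_zero, zero_mul, zero_mul]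

theorem dvd_of_mem_support_of_pderiv_eq_zero [CommRing R] [IsDomain R] (p : ℕ) [CharP R p]
    {q : MvPolynomial σ R} (h : ∀ i, pderiv i q = 0) {d : σ →₀ ℕ} (hd : d ∈ q.support) (i : σ) :
    p ∣ d i := by
  classical
  rcases Nat.eq_zero_or_pos (d i) with h0 | hpos
  · simp [h0]
  have hcoeff := coeff_pderiv (i := i) q (d - Finsupp.single i 1)
  rw [h i, coeff_zero, tsub_add_cancel_of_le (Finsupp.single_le_iff.mpr hpos)] at hcoeff
  have : ((d - Finsupp.single i 1 : σ →₀ ℕ) i + 1 : ℕ) = d i := by simp; omega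
  rw [← Nat.cast_one (R := R), ← Nat.cast_add, this] at hcoeff
  rcases mul_eq_zero.mp hcoeff.symm with hc | hc
  · exact absurd hc (mem_support_iff.mp hd)
  · exact (CharP.cast_eq_zero_iff R p _).mp hc

theorem exists_expand_eq_of_pderiv_eq_zero [CommRing R] [IsDomain R] (p : ℕ) [CharP R p]
    {q : MvPolynomial σ R} (h : ∀ i, pderiv i q = 0) : ∃ q', expand p q' = q := by
  refine ⟨∑ d ∈ q.support, monomial (Finsupp.mapRange (· / p) (Nat.zero_div p) d) (coeff d q),
    ?_⟩
  conv_rhs => rw [← support_sum_monomial_coeff q]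
  rw [map_sum]
  refine Finset.sum_congr rfl fun d hd => ?_
  rw [expand_monomial]
  congr 2
  ext i
  simp [Nat.mul_div_cancel' (dvd_of_mem_support_of_pderiv_eq_zero p h hd i)]

end MvPolynomial

namespace WeylAlgebra

open MvPolynomial

section CommRing

variable {R : Type*} [CommRing R] {n : ℕ}

theorem commute_wX_wX (i j : Fin n) : Commute (wX R n i) (wX R n j) := by
  show _ * _ = _ * _
  simpa only [wX, map_mul] using RingQuot.mkAlgHom_rel R (WeylRel.xx (R := R) (n := n) i j)

theorem commute_wY_wY (i j : Fin n) : Commute (wY R n i) (wY R n j) := by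
  show _ * _ = _ * _
  simpa only [wY, map_mul] using RingQuot.mkAlgHom_rel R (WeylRel.yy (R := R) (n := n) i j)

theorem wY_mul_wX (i j : Fin n) :
    wY R n i * wX R n j = wX R n j * wY R n i + if i = j then 1 else 0 := by
  simpa only [wX, wY, map_mul, map_add, apply_ite (RingQuot.mkAlgHom R (WeylRel R n)), map_one,
    map_zero] using RingQuot.mkAlgHom_rel R (WeylRel.yx (R := R) (n := n) i j)

@[elab_as_elim]
theorem induction {P : WeylAlgebra R n → Prop} (a : WeylAlgebra R n)
    (algebraMap : ∀ r, P (algebraMap R _ r)) (wX : ∀ i, P (wX R n i)) (wY : ∀ i, P (wY R n i))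
    (add : ∀ a b, P a → P b → P (a + b)) (mul : ∀ a b, P a → P b → P (a * b)) : P a := by
  obtain ⟨v, rfl⟩ := RingQuot.mkAlgHom_surjective R (WeylRel R n) a
  induction v using FreeAlgebra.induction with
  | grade0 r => simpa using algebraMap r
  | grade1 s => cases s with
    | inl i => exact wX i
    | inr i => exact wY i
  | mul a b ha hb => simpa using mul _ _ ha hb
  | add a b ha hb => simpa using add _ _ ha hb

theorem mem_center_of_commute {z : WeylAlgebra R n} (hx : ∀ i, Commute (wX R n i) z)
    (hy : ∀ i, Commute (wY R n i) z) : z ∈ Subalgebra.center R (WeylAlgebra R n) := by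
  rw [Subalgebra.mem_center_iff]
  intro a
  induction a using WeylAlgebra.induction with
  | algebraMap r => exact Algebra.commutes r z
  | wX i => exact hx i
  | wY i => exact hy i
  | add a b ha hb => rw [add_mul, mul_add, ha, hb]
  | mul a b ha hb => rw [mul_assoc, hb, ← mul_assoc, ha, mul_assoc]

variable (R n) in
noncomputable def aevalX : MvPolynomial (Fin n) R →ₐ[R] WeylAlgebra R n :=
  aevalOfCommute (wX R n) commute_wX_wX

variable (R n) in
noncomputable def aevalY : MvPolynomial (Fin n) R →ₐ[R] WeylAlgebra R n :=
  aevalOfCommute (wY R n) commute_wY_wY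

@[simp] theorem aevalX_X (i : Fin n) : aevalX R n (X i) = wX R n i := aevalOfCommute_X ..

@[simp] theorem aevalY_X (i : Fin n) : aevalY R n (X i) = wY R n i := aevalOfCommute_X ..

theorem wY_mul_aevalX (j : Fin n) (f : MvPolynomial (Fin n) R) :
    wY R n j * aevalX R n f = aevalX R n f * wY R n j + aevalX R n (pderiv j f) := by
  classical
  induction f using MvPolynomial.induction_on with
  | C a => simp [Algebra.commutes]
  | add f g hf hg => simp only [map_add, mul_add, add_mul, hf, hg]; abel
  | mul_X f i hf =>
    rw [map_mul, aevalX_X, ← mul_assoc, hf, add_mul, mul_assoc, wY_mul_wX, pderiv_mul, pderiv_X]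
    by_cases hij : j = i
    · subst hij; simp [mul_add, mul_assoc]; abel
    · simp [hij, Ne.symm hij, mul_assoc]

theorem aevalY_mul_wX (j : Fin n) (g : MvPolynomial (Fin n) R) :
    aevalY R n g * wX R n j = wX R n j * aevalY R n g + aevalY R n (pderiv j g) := by
  classical
  induction g using MvPolynomial.induction_on with
  | C a => simp [Algebra.commutes]
  | add f g hf hg => simp only [map_add, mul_add, add_mul, hf, hg]; abel
  | mul_X g i hg =>
    rw [map_mul, aevalY_X, mul_assoc, wY_mul_wX, mul_add, ← mul_assoc, hg, pderiv_mul, pderiv_X]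
    by_cases hij : i = j
    · subst hij; simp [add_mul, mul_assoc]; abel
    · simp [hij, add_mul, mul_assoc]

/- The extra variables `ηᵢ` make this faithful: on `R[ξ]` alone `yᵢ` would act as `∂/∂ξᵢ`, whose
`p`-th power vanishes in characteristic `p`. -/
variable (R n) in
noncomputable def polyRep : WeylAlgebra R n →ₐ[R] Module.End R (MvPolynomial (Fin n ⊕ Fin n) R) :=
  RingQuot.liftAlgHom R ⟨FreeAlgebra.lift R (Sum.elim
    (fun i => LinearMap.mulLeft R (X (Sum.inl i)))
    (fun i => (pderiv (Sum.inl i)).toLinearMap + LinearMap.mulLeft R (X (Sum.inr i)))), by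
    rintro _ _ (⟨i, j⟩ | ⟨i, j⟩ | ⟨i, j⟩) <;> refine LinearMap.ext fun q => ?_ <;>
      simp only [map_mul, map_add, FreeAlgebra.lift_ι_apply, Sum.elim_inl, Sum.elim_inr,
        Module.End.mul_apply, LinearMap.add_apply, LinearMap.mulLeft_apply, Derivation.coeFn_coe]
    · ring
    · simp only [pderiv_mul, pderiv_comm (Sum.inl i) (Sum.inl j), pderiv_X_of_ne Sum.inr_ne_inl,
        zero_mul]
      ring
    · by_cases hij : i = j
      · subst hij; simp; ring
      · simp [hij, Ne.symm hij]; ring⟩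

theorem polyRep_wX_apply (i : Fin n) (q : MvPolynomial (Fin n ⊕ Fin n) R) :
    polyRep R n (wX R n i) q = X (Sum.inl i) * q := by
  simp [polyRep, wX]

theorem polyRep_wY_apply (i : Fin n) (q : MvPolynomial (Fin n ⊕ Fin n) R) :
    polyRep R n (wY R n i) q = pderiv (Sum.inl i) q + X (Sum.inr i) * q := by
  simp [polyRep, wY]

theorem polyRep_aevalX_apply (f : MvPolynomial (Fin n) R) (q : MvPolynomial (Fin n ⊕ Fin n) R) :
    polyRep R n (aevalX R n f) q = rename Sum.inl f * q := by
  have : (polyRep R n).comp (aevalX R n) = (Algebra.lmul R _).comp (rename Sum.inl) := by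
    ext1 i; exact LinearMap.ext fun q => by simp [polyRep_wX_apply]
  exact LinearMap.congr_fun (DFunLike.congr_fun this f) q

theorem polyRep_aevalY_apply (g : MvPolynomial (Fin n) R) {q : MvPolynomial (Fin n ⊕ Fin n) R}
    (hq : ∀ i, pderiv (Sum.inl i) q = 0) :
    polyRep R n (aevalY R n g) q = rename Sum.inr g * q := by
  induction g using MvPolynomial.induction_on generalizing q with
  | C a => simp [Algebra.smul_def]
  | add f g hf hg => simp [hf hq, hg hq, add_mul]
  | mul_X g i hg =>
    have hq' : ∀ j, pderiv (Sum.inl j) (X (Sum.inr i) * q) = 0 := by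
      simp [hq]
    simp [polyRep_wY_apply, hq, hg hq', mul_assoc, mul_left_comm]

variable (R n) in
noncomputable def normalOrder : MvPolynomial (Fin n ⊕ Fin n) R →ₗ[R] WeylAlgebra R n :=
  TensorProduct.lift ((LinearMap.mul R _).compl₁₂ (aevalX R n).toLinearMap
    (aevalY R n).toLinearMap) ∘ₗ (tensorEquivSum R (Fin n) (Fin n) R).symm.toLinearMap

theorem normalOrder_rename_mul_rename (f g : MvPolynomial (Fin n) R) :
    normalOrder R n (rename Sum.inl f * rename Sum.inr g) = aevalX R n f * aevalY R n g := by
  rw [← tensorEquivSum_tmul]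
  simp [normalOrder]

theorem normalOrder_one : normalOrder R n 1 = 1 := by
  simpa using normalOrder_rename_mul_rename (R := R) (n := n) 1 1

theorem polyRep_normalOrder_apply_one (q : MvPolynomial (Fin n ⊕ Fin n) R) :
    polyRep R n (normalOrder R n q) 1 = q := by
  induction q using induction_on_rename_mul_rename with
  | add a b ha hb => simp only [map_add, LinearMap.add_apply, ha, hb]
  | rename_mul f g =>
    rw [normalOrder_rename_mul_rename, map_mul, Module.End.mul_apply,
      polyRep_aevalY_apply g fun _ => pderiv_one, mul_one, polyRep_aevalX_apply]

theorem normalOrder_injective : Function.Injective (normalOrder R n) :=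
  Function.LeftInverse.injective (g := fun a => polyRep R n a 1) polyRep_normalOrder_apply_one

theorem wX_mul_normalOrder (j : Fin n) (q : MvPolynomial (Fin n ⊕ Fin n) R) :
    wX R n j * normalOrder R n q = normalOrder R n (X (Sum.inl j) * q) := by
  induction q using induction_on_rename_mul_rename with
  | add a b ha hb => simp only [map_add, mul_add, ha, hb]
  | rename_mul f g =>
    rw [normalOrder_rename_mul_rename, ← mul_assoc, ← aevalX_X, ← map_mul,
      ← normalOrder_rename_mul_rename, map_mul (rename Sum.inl), rename_X, mul_assoc]

theorem normalOrder_mul_wY (j : Fin n) (q : MvPolynomial (Fin n ⊕ Fin n) R) :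
    normalOrder R n q * wY R n j = normalOrder R n (X (Sum.inr j) * q) := by
  induction q using induction_on_rename_mul_rename with
  | add a b ha hb => simp only [map_add, add_mul, mul_add, ha, hb]
  | rename_mul f g =>
    rw [normalOrder_rename_mul_rename, mul_assoc, ← aevalY_X, ← map_mul,
      ← normalOrder_rename_mul_rename, map_mul (rename Sum.inr), rename_X]
    ring_nf

theorem wY_mul_normalOrder (j : Fin n) (q : MvPolynomial (Fin n ⊕ Fin n) R) :
    wY R n j * normalOrder R n q =
      normalOrder R n (X (Sum.inr j) * q + pderiv (Sum.inl j) q) := by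
  induction q using induction_on_rename_mul_rename with
  | add a b ha hb => simp only [map_add, mul_add, ha, hb]; abel
  | rename_mul f g =>
    rw [normalOrder_rename_mul_rename, ← mul_assoc, wY_mul_aevalX, add_mul, mul_assoc,
      ← aevalY_X, ← map_mul, pderiv_inl_rename_mul_rename, map_add,
      ← normalOrder_rename_mul_rename, ← normalOrder_rename_mul_rename, map_mul (rename Sum.inr),
      rename_X, mul_left_comm]

theorem normalOrder_mul_wX (j : Fin n) (q : MvPolynomial (Fin n ⊕ Fin n) R) :
    normalOrder R n q * wX R n j =
      normalOrder R n (X (Sum.inl j) * q + pderiv (Sum.inr j) q) := by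
  induction q using induction_on_rename_mul_rename with
  | add a b ha hb => simp only [map_add, add_mul, mul_add, ha, hb]; abel
  | rename_mul f g =>
    rw [normalOrder_rename_mul_rename, mul_assoc, aevalY_mul_wX, mul_add, ← mul_assoc,
      ← aevalX_X, ← map_mul, pderiv_inr_rename_mul_rename, map_add,
      ← normalOrder_rename_mul_rename, ← normalOrder_rename_mul_rename, map_mul (rename Sum.inl),
      rename_X]
    ring_nf

theorem mul_normalOrder (a : WeylAlgebra R n) (q : MvPolynomial (Fin n ⊕ Fin n) R) :
    a * normalOrder R n q = normalOrder R n (polyRep R n a q) := by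
  induction a using WeylAlgebra.induction generalizing q with
  | algebraMap r => simp [Algebra.algebraMap_eq_smul_one]
  | wX i => rw [wX_mul_normalOrder, polyRep_wX_apply]
  | wY i => rw [wY_mul_normalOrder, polyRep_wY_apply, add_comm]
  | add a b ha hb => rw [add_mul, ha, hb, map_add, LinearMap.add_apply, map_add]
  | mul a b ha hb => rw [mul_assoc, hb, ha, map_mul, Module.End.mul_apply]

theorem normalOrder_surjective : Function.Surjective (normalOrder R n) :=
  fun a => ⟨polyRep R n a 1, by rw [← mul_normalOrder, normalOrder_one, mul_one]⟩

theorem wX_pow_mul_normalOrder (j : Fin n) (m : ℕ) (q : MvPolynomial (Fin n ⊕ Fin n) R) :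
    wX R n j ^ m * normalOrder R n q = normalOrder R n (X (Sum.inl j) ^ m * q) := by
  induction m generalizing q with
  | zero => simp
  | succ m ih => rw [pow_succ, mul_assoc, wX_mul_normalOrder, ih, pow_succ, mul_assoc]

theorem normalOrder_mul_wY_pow (j : Fin n) (m : ℕ) (q : MvPolynomial (Fin n ⊕ Fin n) R) :
    normalOrder R n q * wY R n j ^ m = normalOrder R n (X (Sum.inr j) ^ m * q) := by
  induction m with
  | zero => simp
  | succ m ih => rw [pow_succ, ← mul_assoc, ih, normalOrder_mul_wY, pow_succ', mul_assoc]

theorem pderiv_eq_zero_of_normalOrder_mem_center {q : MvPolynomial (Fin n ⊕ Fin n) R}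
    (hq : normalOrder R n q ∈ Subalgebra.center R (WeylAlgebra R n)) (s : Fin n ⊕ Fin n) :
    pderiv s q = 0 := by
  rw [Subalgebra.mem_center_iff] at hq
  cases s with
  | inl j =>
    have := hq (wY R n j)
    rw [wY_mul_normalOrder, normalOrder_mul_wY] at this
    exact add_eq_left.mp (normalOrder_injective this)
  | inr j =>
    have := (hq (wX R n j)).symm
    rw [wX_mul_normalOrder, normalOrder_mul_wX] at this
    exact add_eq_left.mp (normalOrder_injective this)

end CommRing

section CharP

variable {F : Type*} [Field F] {n : ℕ} (p : ℕ) [CharP F p]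

theorem weylPthPowers_mem_center (s : Fin n ⊕ Fin n) :
    weylPthPowers F n p s ∈ Subalgebra.center F (WeylAlgebra F n) := by
  cases s with
  | inl i =>
    have hx : wX F n i ^ p = aevalX F n (X i ^ p) := by rw [map_pow, aevalX_X]
    refine mem_center_of_commute (fun j => (commute_wX_wX j i).pow_right p) fun j => ?_
    rw [weylPthPowers, hx, Commute, SemiconjBy, wY_mul_aevalX, pderiv_pow_char, map_zero, add_zero]
  | inr i =>
    have hy : wY F n i ^ p = aevalY F n (X i ^ p) := by rw [map_pow, aevalY_X]
    refine mem_center_of_commute (fun j => ?_) fun j => (commute_wY_wY j i).pow_right p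
    rw [weylPthPowers, hy, Commute, SemiconjBy, aevalY_mul_wX, pderiv_pow_char, map_zero,
      add_zero]

variable (F n) in
noncomputable def centerPthPowers : Fin n ⊕ Fin n → Subalgebra.center F (WeylAlgebra F n) :=
  fun s => ⟨weylPthPowers F n p s, weylPthPowers_mem_center p s⟩

theorem normalOrder_expand (q : MvPolynomial (Fin n ⊕ Fin n) F) :
    normalOrder F n (expand p q) = aeval (centerPthPowers F n p) q := by
  induction q using MvPolynomial.induction_on with
  | C a =>
    rw [expand_C, aeval_C, C_eq_smul_one, map_smul, normalOrder_one, Algebra.algebraMap_eq_smul_one]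
    rfl
  | add f g hf hg => simp only [map_add, hf, hg, Subalgebra.coe_add]
  | mul_X q s hq =>
    rw [map_mul, expand_X, map_mul (aeval _), aeval_X, Subalgebra.coe_mul, ← hq, mul_comm]
    cases s with
    | inl j =>
      rw [← wX_pow_mul_normalOrder]
      exact (Subalgebra.mem_center_iff.mp (weylPthPowers_mem_center (F := F) p (Sum.inl j)) _).symm
    | inr j => rw [← normalOrder_mul_wY_pow]; rfl

theorem aeval_centerPthPowers_bijective (hp : 0 < p) :
    Function.Bijective (aeval (R := F) (centerPthPowers F n p)) := by
  refine ⟨fun a b hab => expand_injective hp (normalOrder_injective ?_), ?_⟩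
  · rw [normalOrder_expand, normalOrder_expand, hab]
  · rintro ⟨z, hz⟩
    obtain ⟨q, rfl⟩ := normalOrder_surjective z
    obtain ⟨q', rfl⟩ :=
      exists_expand_eq_of_pderiv_eq_zero p (pderiv_eq_zero_of_normalOrder_mem_center hz)
    exact ⟨q', Subtype.ext (normalOrder_expand p q').symm⟩

end CharP

end WeylAlgebra

open WeylAlgebra

theorem center_weylAlgebra_algebraicallyIndependent_general
    (p n : ℕ) (F : Type*) [Field F] [CharP F p] (hp : 0 < p) :
    ∃ hc : ∀ s : Fin n ⊕ Fin n, weylPthPowers F n p s ∈ Subalgebra.center F (WeylAlgebra F n),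
      AlgebraicIndependent F
        (fun s : Fin n ⊕ Fin n =>
          (⟨weylPthPowers F n p s, hc s⟩ : Subalgebra.center F (WeylAlgebra F n))) ∧
      Nonempty (↥(Subalgebra.center F (WeylAlgebra F n)) ≃ₐ[F] MvPolynomial (Fin (2 * n)) F) := by
  have hbij := aeval_centerPthPowers_bijective (F := F) (n := n) p hp
  refine ⟨weylPthPowers_mem_center p, hbij.injective, ⟨?_⟩⟩
  exact (AlgEquiv.ofBijective _ hbij).symm.trans
    (MvPolynomial.renameEquiv F (finSumFinEquiv.trans (finCongr (two_mul n).symm)))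

/-- In characteristic `p > 0`, the `2n` central elements `x₁ᵖ,…,xₙᵖ, y₁ᵖ,…,yₙᵖ` of the Weyl
algebra `A_n(F)` are algebraically independent over `F`; consequently the center `Z(A_n(F))`
is isomorphic, as an `F`-algebra, to a polynomial ring over `F` in `2n` variables. -/
theorem center_weylAlgebra_algebraicallyIndependent
    (p n : ℕ) (hn : 1 ≤ n) (F : Type*) [Field F] [CharP F p] (hp : 0 < p) :
    ∃ hc : ∀ s : Fin n ⊕ Fin n, weylPthPowers F n p s ∈ Subalgebra.center F (WeylAlgebra F n),
      AlgebraicIndependent F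
        (fun s : Fin n ⊕ Fin n =>
          (⟨weylPthPowers F n p s, hc s⟩ : Subalgebra.center F (WeylAlgebra F n))) ∧
      Nonempty (↥(Subalgebra.center F (WeylAlgebra F n)) ≃ₐ[F] MvPolynomial (Fin (2 * n)) F) :=
  center_weylAlgebra_algebraicallyIndependent_general p n F hp
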